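/- Let {T_i}_{i∈I} be a (C,C')-controlled K-operator frame with bounds A, B, and let Q ∈ End_A*(H) be invertible with adjointable inverse such that Q^{-1} commutes with K* and Q commutes with C and C'. Then {T_i Q}_{i∈I} is a (C,C')-controlled K-operator frame with bounds A‖Q^{-1}‖^{-2} and B‖Q‖². -/

import Mathlib

/-!
The adjointable operators on `H` form a C⋆-algebra, in which `‖T‖² - T*T` is positive; writing
it as `S*S` gives `⟨Tx, Tx⟩ ≤ ‖T‖² ⟨x, x⟩`. The inverse of `Q` is adjointable: `Q*Q` is
self-adjoint and bounded below, hence invertible in that C⋆-algebra, and `Q⁻¹ = (Q*Q)⁻¹ Q*`.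
The frame bounds for `{T_i Q}` then come from the frame inequality at `Q x`, since `QC = CQ`,
`QC' = C'Q` and `K*x = Q⁻¹ K* Q x`.
-/

open scoped RightActions

/-- The Hilbert C⋆-module class as Mathlib defined it in December 2024 (right `A`-action via
`Aᵐᵒᵖ`); Mathlib's `CStarModule` now uses a left action with different axioms. -/
class CStarModuleRight (A E : Type*) [NonUnitalSemiring A] [StarRing A] [Module ℂ A]
    [AddCommGroup E] [Module ℂ E] [PartialOrder A] [SMul Aᵐᵒᵖ E] [Norm A] [Norm E]
    extends Inner A E where
  inner_add_right {x} {y} {z} : inner x (y + z) = inner x y + inner x z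
  inner_self_nonneg {x} : 0 ≤ inner x x
  inner_self {x} : inner x x = 0 ↔ x = 0
  inner_op_smul_right {a : A} {x y : E} : inner x (y <• a) = inner x y * a
  inner_smul_right_complex {z : ℂ} {x} {y} : inner x (z • y) = z • inner x y
  star_inner x y : star (inner x y) = inner y x
  norm_eq_sqrt_norm_inner_self x : ‖x‖ = √‖inner x x‖

variable {A : Type*} [CStarAlgebra A] [PartialOrder A] [StarOrderedRing A]
variable {H : Type*} [NormedAddCommGroup H] [NormedSpace ℂ H] [CompleteSpace H]
  [SMul Aᵐᵒᵖ H] [CStarModuleRight A H]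

/-- `S` is the adjoint of `T` with respect to the `A`-valued inner product. -/
def IsAdjointOf (T S : H →L[ℂ] H) : Prop :=
  ∀ x y : H, (inner A (T x) y : A) = inner A x (S y)

/-- `C` belongs to `GL⁺(H)` : invertible (with adjointable inverse), self-adjoint
and positive with respect to the `A`-valued inner product. -/
def MemGLPlus (C : H →L[ℂ] H) : Prop :=
  (∃ Ci : H →L[ℂ] H, Ci.comp C = ContinuousLinearMap.id ℂ H ∧
      C.comp Ci = ContinuousLinearMap.id ℂ H) ∧
  (∀ x y : H, (inner A (C x) y : A) = inner A x (C y)) ∧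
  (∀ x : H, (0 : A) ≤ inner A x (C x))

namespace CStarModuleRight

section Algebraic

omit [StarOrderedRing A] [CompleteSpace H]

def innerRightₗ (x : H) : H →ₗ[ℂ] A where
  toFun := inner A x
  map_add' _ _ := inner_add_right
  map_smul' _ _ := inner_smul_right_complex

theorem inner_zero_right {x : H} : inner A x (0 : H) = 0 :=
  map_zero (innerRightₗ x)

theorem inner_sub_right {x y z : H} : inner A x (y - z) = inner A x y - inner A x z :=
  map_sub (innerRightₗ x) y z

theorem inner_smul_right_real {t : ℝ} {x y : H} : inner A x (t • y) = t • inner A x y := by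
  simpa [Complex.coe_smul] using inner_smul_right_complex (A := A) (z := t) (x := x) (y := y)

theorem inner_zero_left {x : H} : inner A (0 : H) x = 0 := by
  rw [← star_inner, inner_zero_right, star_zero]

theorem inner_add_left {x y z : H} : inner A (x + y) z = inner A x z + inner A y z := by
  rw [← star_inner z, inner_add_right, star_add, star_inner, star_inner]

theorem inner_sub_left {x y z : H} : inner A (x - y) z = inner A x z - inner A y z := by
  rw [← star_inner z, inner_sub_right, star_sub, star_inner, star_inner]

theorem inner_smul_left_complex {c : ℂ} {x y : H} :
    inner A (c • x) y = star c • inner A x y := by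
  rw [← star_inner y, inner_smul_right_complex, star_smul, star_inner]

theorem inner_smul_left_real {t : ℝ} {x y : H} : inner A (t • x) y = t • inner A x y := by
  rw [← star_inner y, inner_smul_right_real, star_smul, star_inner, star_trivial]

theorem inner_op_smul_left {a : A} {x y : H} : inner A (x <• a) y = star a * inner A x y := by
  rw [← star_inner y, inner_op_smul_right, star_mul, star_inner]

theorem norm_sq_eq {x : H} : ‖x‖ ^ 2 = ‖inner A x x‖ := by
  rw [norm_eq_sqrt_norm_inner_self (A := A) x, Real.sq_sqrt (norm_nonneg _)]

theorem ext_inner_left {x y : H} (h : ∀ z : H, (inner A z x : A) = inner A z y) : x = y := by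
  rw [← sub_eq_zero, ← inner_self (A := A), inner_sub_right, h, sub_self]

end Algebraic

omit [CompleteSpace H]

theorem inner_mul_inner_swap_le {x y : H} :
    inner A y x * inner A x y ≤ ‖x‖ ^ 2 • inner A y y := by
  rcases eq_or_ne x 0 with rfl | hx
  · simp [inner_zero_left, inner_zero_right]
  set t : ℝ := ‖x‖ ^ 2 with ht_def
  have ht : 0 < t := by positivity
  set a : A := inner A x y with ha
  have hsa : star a = inner A y x := star_inner x y
  have key : (0 : A) ≤ t • (t • inner A y y - inner A y x * inner A x y) := by
    calc (0 : A) ≤ inner A (x <• a - t • y) (x <• a - t • y) := inner_self_nonneg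
      _ = star a * inner A x x * a - t • (star a * inner A x y) - t • (inner A y x * a)
            + t • (t • inner A y y) := by
          simp only [inner_sub_right, inner_op_smul_right, inner_sub_left,
            inner_op_smul_left, inner_smul_left_real, sub_mul, smul_mul_assoc,
            inner_smul_right_real, smul_sub, mul_assoc]
          abel
      _ ≤ t • (star a * a) - t • (star a * inner A x y) - t • (inner A y x * a)
            + t • (t • inner A y y) := by
          gcongr
          calc _ ≤ ‖inner A x x‖ • (star a * a) :=
              CStarAlgebra.star_left_conjugate_le_norm_smul (hb := star_inner x x)
            _ = t • (star a * a) := by rw [ht_def, norm_sq_eq (A := A)]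
      _ = t • (t • inner A y y - inner A y x * inner A x y) := by
          rw [hsa, ← ha, smul_sub]
          abel
  have := smul_nonneg (inv_nonneg.mpr ht.le) key
  rwa [smul_smul, inv_mul_cancel₀ ht.ne', one_smul, sub_nonneg] at this

theorem norm_inner_le {x y : H} : ‖inner A x y‖ ≤ ‖x‖ * ‖y‖ := by
  have := calc ‖inner A x y‖ ^ 2 = ‖inner A y x * inner A x y‖ := by
                rw [← star_inner x y, CStarRing.norm_star_mul_self, pow_two]
    _ ≤ ‖‖x‖ ^ 2 • inner A y y‖ := by
                refine CStarAlgebra.norm_le_norm_of_nonneg_of_le ?_ inner_mul_inner_swap_le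
                rw [← star_inner x y]
                exact star_mul_self_nonneg _
    _ = (‖x‖ * ‖y‖) ^ 2 := by
                rw [norm_smul, Real.norm_of_nonneg (by positivity), ← norm_sq_eq, mul_pow]
  exact (pow_le_pow_iff_left₀ (norm_nonneg _) (by positivity) two_ne_zero).mp this

theorem continuous_inner_right (x : H) : Continuous (inner A x : H → A) :=
  ((innerRightₗ x).mkContinuous ‖x‖ fun _ => norm_inner_le).continuous

theorem continuous_inner_left (y : H) : Continuous (fun x : H => inner A x y) := by
  simpa only [star_inner] using (continuous_inner_right (A := A) y).star

end CStarModuleRight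

theorem ContinuousLinearMap.opNorm_sq_le_of_forall {𝕜 E F : Type*} [NontriviallyNormedField 𝕜]
    [NormedAddCommGroup E] [NormedSpace 𝕜 E] [NormedAddCommGroup F] [NormedSpace 𝕜 F]
    (T : E →L[𝕜] F) {c : ℝ} (hc : 0 ≤ c) (h : ∀ x, ‖T x‖ ^ 2 ≤ c * ‖x‖ ^ 2) : ‖T‖ ^ 2 ≤ c := by
  refine (Real.le_sqrt (norm_nonneg _) hc).mp (T.opNorm_le_bound (Real.sqrt_nonneg c) fun x => ?_)
  rw [← Real.sqrt_sq (norm_nonneg (T x)), ← Real.sqrt_sq (norm_nonneg x), ← Real.sqrt_mul hc]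
  exact Real.sqrt_le_sqrt (h x)

theorem ContinuousLinearMap.norm_le_mul_norm_comp {𝕜 E : Type*} [NontriviallyNormedField 𝕜]
    [NormedAddCommGroup E] [NormedSpace 𝕜 E] {f : E →L[𝕜] E} {c : ℝ} (hc : 0 ≤ c)
    (hf : ∀ z, ‖z‖ ≤ c * ‖f z‖) (g : E →L[𝕜] E) : ‖g‖ ≤ c * ‖f ∘L g‖ :=
  g.opNorm_le_bound (by positivity) fun z =>
    (hf (g z)).trans <| by
      rw [mul_assoc]
      exact mul_le_mul_of_nonneg_left ((f ∘L g).le_opNorm z) hc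

namespace IsAdjointOf

omit [StarOrderedRing A] [CompleteSpace H] in
theorem symm {f g : H →L[ℂ] H} (h : IsAdjointOf (A := A) f g) : IsAdjointOf (A := A) g f :=
  fun x y => by rw [← CStarModuleRight.star_inner y, ← h, CStarModuleRight.star_inner]

omit [StarOrderedRing A] [CompleteSpace H] in
theorem unique {f g g' : H →L[ℂ] H} (h : IsAdjointOf (A := A) f g)
    (h' : IsAdjointOf (A := A) f g') : g = g' :=
  ContinuousLinearMap.ext fun y => CStarModuleRight.ext_inner_left (A := A) fun z => by rw [← h, h']

omit [StarOrderedRing A] [CompleteSpace H] in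
theorem sub {f₁ f₂ g₁ g₂ : H →L[ℂ] H} (h₁ : IsAdjointOf (A := A) f₁ g₁)
    (h₂ : IsAdjointOf (A := A) f₂ g₂) : IsAdjointOf (A := A) (f₁ - f₂) (g₁ - g₂) := fun x y => by
  simp only [sub_apply, CStarModuleRight.inner_sub_left, CStarModuleRight.inner_sub_right,
    h₁ x y, h₂ x y]

omit [CompleteSpace H] in
theorem norm_sq_le {f g : H →L[ℂ] H} (h : IsAdjointOf (A := A) f g) : ‖f‖ ^ 2 ≤ ‖g ∘L f‖ :=
  f.opNorm_sq_le_of_forall (norm_nonneg _) fun x =>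
    calc ‖f x‖ ^ 2 = ‖inner A x (g (f x))‖ := by rw [CStarModuleRight.norm_sq_eq (A := A), h]
      _ ≤ ‖x‖ * ‖g (f x)‖ := CStarModuleRight.norm_inner_le
      _ ≤ ‖x‖ * (‖g ∘L f‖ * ‖x‖) := by gcongr; exact (g ∘L f).le_opNorm x
      _ = ‖g ∘L f‖ * ‖x‖ ^ 2 := by ring

omit [CompleteSpace H] in
theorem norm_le {f g : H →L[ℂ] H} (h : IsAdjointOf (A := A) f g) : ‖g‖ ≤ ‖f‖ := by
  have h₁ := h.symm.norm_sq_le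
  have h₂ := f.opNorm_comp_le g
  nlinarith [norm_nonneg f, norm_nonneg g]

end IsAdjointOf

section Adjointables

omit [StarOrderedRing A] [CompleteSpace H]

variable (A H) in
def adjointables : Subalgebra ℂ (H →L[ℂ] H) where
  carrier := {f | ∃ g, IsAdjointOf (A := A) f g}
  add_mem' := by
    rintro f₁ f₂ ⟨g₁, h₁⟩ ⟨g₂, h₂⟩
    exact ⟨g₁ + g₂, fun x y => by
      simp only [add_apply, CStarModuleRight.inner_add_left,
        CStarModuleRight.inner_add_right, h₁ x y, h₂ x y]⟩
  mul_mem' := by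
    rintro f₁ f₂ ⟨g₁, h₁⟩ ⟨g₂, h₂⟩
    exact ⟨g₂ * g₁, fun x y => by
      rw [mul_apply_eq_comp, mul_apply_eq_comp, h₁, h₂]⟩
  algebraMap_mem' c := by
    refine ⟨algebraMap ℂ _ (star c), fun x y => ?_⟩
    simp only [Algebra.algebraMap_eq_smul_one, smul_apply,
      one_apply_eq_self, CStarModuleRight.inner_smul_left_complex,
      CStarModuleRight.inner_smul_right_complex]

namespace adjointables

noncomputable instance : Star (adjointables A H) :=
  ⟨fun f => ⟨f.2.choose, f.1, f.2.choose_spec.symm⟩⟩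

theorem isAdjointOf_star (f : adjointables A H) :
    IsAdjointOf (A := A) f.1 (star f).1 :=
  f.2.choose_spec

theorem star_eq {f : adjointables A H} {g : H →L[ℂ] H} (h : IsAdjointOf (A := A) f.1 g) :
    (star f).1 = g :=
  (isAdjointOf_star f).unique h

noncomputable instance : StarRing (adjointables A H) where
  star_involutive f := Subtype.ext <| star_eq (isAdjointOf_star f).symm
  star_mul f g := Subtype.ext <| star_eq fun x y => by
    simp only [Subalgebra.coe_mul, mul_apply_eq_comp, isAdjointOf_star f _ _,
      isAdjointOf_star g _ _]
  star_add f g := Subtype.ext <| star_eq fun x y => by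
    simp only [Subalgebra.coe_add, add_apply, CStarModuleRight.inner_add_left,
      CStarModuleRight.inner_add_right, isAdjointOf_star f x y, isAdjointOf_star g x y]

noncomputable instance : StarModule ℂ (adjointables A H) where
  star_smul c f := Subtype.ext <| star_eq fun x y => by
    simp only [SetLike.val_smul, smul_apply,
      CStarModuleRight.inner_smul_left_complex, CStarModuleRight.inner_smul_right_complex,
      isAdjointOf_star f x y]

end adjointables

end Adjointables

namespace adjointables

omit [CompleteSpace H] in
instance : CStarRing (adjointables A H) where
  norm_mul_self_le f := by
    rw [← sq]
    exact (isAdjointOf_star f).norm_sq_le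

theorem isClosed : IsClosed (adjointables A H : Set (H →L[ℂ] H)) := by
  refine IsSeqClosed.isClosed fun u f hu hf => ?_
  choose g hg using hu
  have hg_cauchy : CauchySeq g := by
    refine Metric.cauchySeq_iff.mpr fun ε hε => ?_
    obtain ⟨N, hN⟩ := Metric.cauchySeq_iff.mp hf.cauchySeq ε hε
    refine ⟨N, fun m hm n hn => ?_⟩
    rw [dist_eq_norm]
    exact ((hg m).sub (hg n)).norm_le.trans_lt (by simpa only [dist_eq_norm] using hN m hm n hn)
  obtain ⟨g', hg'⟩ := cauchySeq_tendsto_of_complete hg_cauchy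
  show ∃ g, IsAdjointOf (A := A) f g
  refine ⟨g', fun x y =>
    tendsto_nhds_unique (f := fun n => inner A (u n x) y) (l := Filter.atTop) ?_ ?_⟩
  · exact ((CStarModuleRight.continuous_inner_left y).tendsto _).comp
      (((ContinuousLinearMap.apply ℂ H x).continuous.tendsto f).comp hf)
  · exact (Filter.tendsto_congr fun n => hg n x y).mpr <|
      ((CStarModuleRight.continuous_inner_right x).tendsto _).comp
        (((ContinuousLinearMap.apply ℂ H y).continuous.tendsto g').comp hg')

instance : CompleteSpace (adjointables A H) :=
  isClosed.completeSpace_coe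

noncomputable instance : CStarAlgebra (adjointables A H) where

noncomputable instance : PartialOrder (adjointables A H) :=
  CStarAlgebra.spectralOrder _

instance : StarOrderedRing (adjointables A H) :=
  CStarAlgebra.spectralOrderedRing _

theorem inner_apply_nonneg {c : adjointables A H} (hc : 0 ≤ c) (x : H) :
    (0 : A) ≤ inner A x (c.1 x) := by
  obtain ⟨b, rfl⟩ := CStarAlgebra.nonneg_iff_eq_star_mul_self.mp hc
  rw [Subalgebra.coe_mul, mul_apply_eq_comp, ← isAdjointOf_star b]
  exact CStarModuleRight.inner_self_nonneg

end adjointables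

theorem IsAdjointOf.inner_self_apply_le {f g : H →L[ℂ] H} (h : IsAdjointOf (A := A) f g)
    (x : H) : inner A (f x) (f x) ≤ ‖f‖ ^ 2 • inner A x x := by
  let F : adjointables A H := ⟨f, g, h⟩
  have := adjointables.inner_apply_nonneg
    (sub_nonneg.mpr (CStarAlgebra.star_mul_le_algebraMap_norm_sq (a := F))) x
  rw [Subalgebra.coe_sub, sub_apply, CStarModuleRight.inner_sub_right, Subalgebra.coe_mul,
    mul_apply_eq_comp, ← adjointables.isAdjointOf_star F, sub_nonneg] at this
  convert this using 1
  rw [← CStarModuleRight.inner_smul_right_real]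
  rfl

theorem IsSelfAdjoint.isUnit_of_norm_le_mul_norm_mul {S : Type*} [CStarAlgebra S] {a : S}
    (ha : IsSelfAdjoint a) {c : ℝ} (h : ∀ b : S, ‖b‖ ≤ c * ‖a * b‖) : IsUnit a := by
  nontriviality S
  have hc : 0 < c := by
    have h1 := h 1
    rw [norm_one, mul_one] at h1
    nlinarith [norm_nonneg a]
  by_contra hu
  -- `e := f(a)` has `‖e‖ ≥ f 0 = 1` because `0 ∈ σ(a)`, while `‖a e‖ ≤ sup |x f(x)| ≤ 1 / (2c)`
  set f : ℝ → ℝ := fun x => (1 + 2 * c * |x|)⁻¹ with hf_def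
  have hf_pos : ∀ x, 0 < 1 + 2 * c * |x| := fun x => by positivity
  have hf : Continuous f :=
    (by fun_prop : Continuous fun x : ℝ => 1 + 2 * c * |x|).inv₀ fun x => (hf_pos x).ne'
  have he : 1 ≤ ‖cfc f a‖ := by
    simpa [hf_def] using norm_apply_le_norm_cfc f a ((spectrum.zero_mem_iff ℝ).mpr hu)
  have hae : ‖a * cfc f a‖ ≤ (2 * c)⁻¹ := by
    have hmul : cfc (fun x => x * f x) a = a * cfc f a := by
      rw [cfc_mul (fun x : ℝ => x) f a (continuousOn_id' _) hf.continuousOn, cfc_id' ℝ a]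
    rw [← hmul]
    refine norm_cfc_le (by positivity) fun x _ => ?_
    rw [norm_mul, Real.norm_eq_abs, Real.norm_of_nonneg (inv_nonneg.mpr (hf_pos x).le),
      ← div_eq_mul_inv, div_le_iff₀ (hf_pos x)]
    field_simp
    linarith
  have : (1 : ℝ) ≤ 1 / 2 :=
    calc 1 ≤ ‖cfc f a‖ := he
      _ ≤ c * ‖a * cfc f a‖ := h _
      _ ≤ c * (2 * c)⁻¹ := by gcongr
      _ = 1 / 2 := by field_simp
  norm_num at this

omit [CompleteSpace H] in
theorem IsAdjointOf.norm_le_mul_norm_apply_of_comp_eq_id {Q Qs Qi : H →L[ℂ] H}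
    (hQ : IsAdjointOf (A := A) Q Qs) (hQQi : Q ∘L Qi = .id ℂ H) (y : H) : ‖y‖ ≤ ‖Qi‖ * ‖Qs y‖ := by
  have : ‖y‖ ^ 2 ≤ ‖y‖ * (‖Qi‖ * ‖Qs y‖) :=
    calc ‖y‖ ^ 2 = ‖inner A (Q (Qi y)) y‖ := by
          rw [← ContinuousLinearMap.comp_apply, hQQi, ContinuousLinearMap.id_apply,
            CStarModuleRight.norm_sq_eq (A := A)]
      _ = ‖inner A (Qi y) (Qs y)‖ := by rw [hQ]
      _ ≤ ‖Qi y‖ * ‖Qs y‖ := CStarModuleRight.norm_inner_le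
      _ ≤ ‖Qi‖ * ‖y‖ * ‖Qs y‖ := by gcongr; exact Qi.le_opNorm y
      _ = ‖y‖ * (‖Qi‖ * ‖Qs y‖) := by ring
  rcases (norm_nonneg y).eq_or_lt with hy | hy
  · rw [← hy]
    positivity
  · exact le_of_mul_le_mul_left (by rwa [← sq]) hy

theorem IsAdjointOf.exists_isAdjointOf_of_inverse {Q Qs Qi : H →L[ℂ] H}
    (hQ : IsAdjointOf (A := A) Q Qs) (h₁ : Q ∘L Qi = .id ℂ H) (h₂ : Qi ∘L Q = .id ℂ H) :
    ∃ R, IsAdjointOf (A := A) Qi R := by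
  let q : adjointables A H := ⟨Q, Qs, hQ⟩
  have hbdd : ∀ z, ‖z‖ ≤ ‖Qi‖ ^ 2 * ‖(star q).1 (Q z)‖ := fun z =>
    calc ‖z‖ = ‖Qi (Q z)‖ := by
          rw [← ContinuousLinearMap.comp_apply, h₂, ContinuousLinearMap.id_apply]
      _ ≤ ‖Qi‖ * ‖Q z‖ := Qi.le_opNorm _
      _ ≤ ‖Qi‖ * (‖Qi‖ * ‖(star q).1 (Q z)‖) := by
          gcongr
          exact (adjointables.isAdjointOf_star q).norm_le_mul_norm_apply_of_comp_eq_id h₁ _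
      _ = ‖Qi‖ ^ 2 * ‖(star q).1 (Q z)‖ := by ring
  have hu : IsUnit (star q * q) := (IsSelfAdjoint.star_mul_self q).isUnit_of_norm_le_mul_norm_mul
    fun b => ContinuousLinearMap.norm_le_mul_norm_comp (sq_nonneg _) hbdd b.1
  have hwq : (↑hu.unit⁻¹ * star q) * q = 1 := by rw [mul_assoc, hu.val_inv_mul]
  rw [← left_inv_eq_right_inv (congrArg Subtype.val hwq) h₁]
  exact ⟨_, adjointables.isAdjointOf_star _⟩

theorem div_sq_smul_le_smul_of_le_sq_smul {M : Type*} [AddCommGroup M] [PartialOrder M]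
    [Module ℝ M] [PosSMulMono ℝ M] {y z : M} {a c : ℝ} (ha : 0 ≤ a) (hz : 0 ≤ z)
    (h : y ≤ c ^ 2 • z) : (a / c ^ 2) • y ≤ a • z := by
  rcases eq_or_ne c 0 with rfl | hc
  · simpa using smul_nonneg ha hz
  calc (a / c ^ 2) • y ≤ (a / c ^ 2) • (c ^ 2 • z) := by gcongr
    _ = a • z := by rw [smul_smul, div_mul_cancel₀ a (pow_ne_zero 2 hc)]

theorem stmt_8_general {ι : Type*} (C C' Ks Q Qi : H →L[ℂ] H) (T : ι → H →L[ℂ] H)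
    (hQinv : Q.comp Qi = ContinuousLinearMap.id ℂ H ∧
      Qi.comp Q = ContinuousLinearMap.id ℂ H)
    (hQadj : ∃ Qs : H →L[ℂ] H, IsAdjointOf (A := A) Q Qs)
    (hQiKs : Qi.comp Ks = Ks.comp Qi)
    (hQC : Q.comp C = C.comp Q) (hQC' : Q.comp C' = C'.comp Q)
    (a b : ℝ) (ha : 0 < a) (hb : 0 < b)
    (hframe : ∀ x : H,
      a • (inner A (Ks x) (Ks x) : A) ≤ ∑' i, (inner A (T i (C x)) (T i (C' x)) : A) ∧
      ∑' i, (inner A (T i (C x)) (T i (C' x)) : A) ≤ b • inner A x x) :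
    ∀ x : H,
      (a / ‖Qi‖ ^ 2) • (inner A (Ks x) (Ks x) : A) ≤
        ∑' i, (inner A (T i (Q (C x))) (T i (Q (C' x))) : A) ∧
      ∑' i, (inner A (T i (Q (C x))) (T i (Q (C' x))) : A) ≤
        (b * ‖Q‖ ^ 2) • inner A x x := by
  obtain ⟨Qs, hQs⟩ := hQadj
  obtain ⟨Qis, hQis⟩ := hQs.exists_isAdjointOf_of_inverse hQinv.1 hQinv.2
  intro x
  obtain ⟨hlow, hup⟩ := hframe (Q x)
  have hKs : Qi (Ks (Q x)) = Ks x :=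
    (DFunLike.congr_fun hQiKs (Q x)).trans (congrArg Ks (DFunLike.congr_fun hQinv.2 x))
  have hQCx : Q (C x) = C (Q x) := DFunLike.congr_fun hQC x
  have hQC'x : Q (C' x) = C' (Q x) := DFunLike.congr_fun hQC' x
  rw [hQCx, hQC'x]
  constructor
  · calc (a / ‖Qi‖ ^ 2) • inner A (Ks x) (Ks x)
        ≤ a • inner A (Ks (Q x)) (Ks (Q x)) := by
          rw [← hKs]
          exact div_sq_smul_le_smul_of_le_sq_smul ha.le CStarModuleRight.inner_self_nonneg
            (hQis.inner_self_apply_le _)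
      _ ≤ _ := hlow
  · calc _ ≤ b • inner A (Q x) (Q x) := hup
      _ ≤ b • (‖Q‖ ^ 2 • inner A x x) := by gcongr; exact hQs.inner_self_apply_le x
      _ = (b * ‖Q‖ ^ 2) • inner A x x := smul_smul _ _ _

/-- if `{T_i}` is a `(C,C')`-controlled `K`-operator frame with bounds
`A, B` and `Q` is invertible with `Q⁻¹` commuting with `K*` and `Q` commuting with
`C, C'`, then `{T_i Q}` is a `(C,C')`-controlled `K`-operator frame with bounds
`A‖Q⁻¹‖⁻²` and `B‖Q‖²`. -/
theorem stmt_8 {ι : Type*} (C C' K Ks Q Qi : H →L[ℂ] H) (T : ι → H →L[ℂ] H)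
    (hC : MemGLPlus (A := A) C) (hC' : MemGLPlus (A := A) C')
    (hK : IsAdjointOf (A := A) K Ks)
    (hQinv : Q.comp Qi = ContinuousLinearMap.id ℂ H ∧
      Qi.comp Q = ContinuousLinearMap.id ℂ H)
    (hQadj : ∃ Qs : H →L[ℂ] H, IsAdjointOf (A := A) Q Qs)
    (hQiKs : Qi.comp Ks = Ks.comp Qi)
    (hQC : Q.comp C = C.comp Q) (hQC' : Q.comp C' = C'.comp Q)
    (a b : ℝ) (ha : 0 < a) (hb : 0 < b)
    (hframe : ∀ x : H,
      a • (inner A (Ks x) (Ks x) : A) ≤ ∑' i, (inner A (T i (C x)) (T i (C' x)) : A) ∧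
      ∑' i, (inner A (T i (C x)) (T i (C' x)) : A) ≤ b • inner A x x) :
    ∀ x : H,
      (a / ‖Qi‖ ^ 2) • (inner A (Ks x) (Ks x) : A) ≤
        ∑' i, (inner A (T i (Q (C x))) (T i (Q (C' x))) : A) ∧
      ∑' i, (inner A (T i (Q (C x))) (T i (Q (C' x))) : A) ≤
        (b * ‖Q‖ ^ 2) • inner A x x :=
  stmt_8_general C C' Ks Q Qi T hQinv hQadj hQiKs hQC hQC' a b ha hb hframe
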